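/- The global function f_L of the sand automaton L is not F-surjective: there exists a finite configuration (namely c with c_0 = 2 and c_i = 0 for i ≠ 0) that has no finite preimage under f_L. -/

import Mathlib

/-- The extended integers `ℤ ∪ {-∞, +∞}`. -/
abbrev EZ : Type := WithBot (WithTop ℤ)

/-- Embedding of `ℤ` into the extended integers. -/
def finVal (n : ℤ) : EZ := ((n : WithTop ℤ) : EZ)

/-- The integer value of a finite extended integer (`0` on `±∞`). -/
def valZ (x : EZ) : ℤ := WithBot.recBotCoe 0 (fun y => WithTop.recTopCoe 0 id y) x

/-- The measuring device `β_l^m`. -/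
noncomputable def beta (l : ℕ) (m : ℤ) (n : EZ) : EZ :=
  if finVal (m + (l : ℤ)) < n then ⊤
  else if n < finVal (m - (l : ℤ)) then ⊥
  else WithBot.map (WithTop.map (fun k => k - m)) n

/-- Reference height: the value of `x` if finite, `0` if `x = ±∞`. -/
def refH (x : EZ) : ℤ := if x = ⊥ ∨ x = ⊤ then 0 else valZ x

/-- One-dimensional sandpile configurations. -/
abbrev Config : Type := ℤ → EZ

/-- The neighborhood sequence `d_r^i(c)`: the `2r`-tuple of measured differences. -/
noncomputable def nbhd (r : ℕ) (c : Config) (i : ℤ) : Fin (2 * r) → EZ :=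
  fun j => beta r (refH (c i))
    (c (i + (if (j : ℕ) < r then ((j : ℕ) : ℤ) - (r : ℤ) else ((j : ℕ) : ℤ) - (r : ℤ) + 1)))

/-- The global function of the sand automaton of radius `r` with local rule `lam`. -/
noncomputable def globalF (r : ℕ) (lam : (Fin (2 * r) → EZ) → ℤ) (c : Config) : Config :=
  fun i => if c i = ⊥ ∨ c i = ⊤ then c i
    else finVal (valZ (c i) + lam (nbhd r c i))

/-- Finite configurations. -/
def FiniteConf (c : Config) : Prop := ∃ k : ℕ, ∀ i : ℤ, (k : ℤ) ≤ |i| → c i = finVal 0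

/-- Periodic configurations. -/
def PeriodicConf (c : Config) : Prop := ∃ p : ℤ, p ≠ 0 ∧ ∀ i : ℤ, c (i + p) = c i


/-- The local rule of the sand automaton `L`:
`λ_L(x,y) = -1` if `x < 0`, `+1` if `x > 0`, `0` otherwise. -/
noncomputable def lamL (v : Fin 2 → EZ) : ℤ :=
  if v 0 < finVal 0 then -1
  else if finVal 0 < v 0 then 1
  else 0

/-- The finite configuration with a single column of height `2` at position `0`. -/
def cTwo : Config := fun i => if i = 0 then finVal 2 else finVal 0

/-! A column of height `0` stays at height `0` under `f_L` only if its left neighbour also has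
height `0`. In a finite preimage `c` of `cTwo` some column `c_k` with `k > 0` is `0`, and every
column to the right of `0` must land at height `0`, so the zeros propagate leftwards down to
`c_0 = 0`. But `f_L` moves a column by at most one, so `f_L(c)_0 ≠ 2`. -/

theorem finVal_inj {m n : ℤ} : finVal m = finVal n ↔ m = n := by simp [finVal]

theorem finVal_lt_finVal {m n : ℤ} : finVal m < finVal n ↔ m < n := by simp [finVal]

theorem refH_finVal (n : ℤ) : refH (finVal n) = n :=
  if_neg (by simp [finVal])

theorem beta_finVal (l : ℕ) (m n : ℤ) :
    beta l m (finVal n) = if m + l < n then ⊤ else if n < m - l then ⊥ else finVal (n - m) := by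
  simp only [beta, finVal_lt_finVal]
  rfl

theorem eq_finVal_zero_of_beta_one_zero {x : EZ} (h : beta 1 0 x = finVal 0) : x = finVal 0 := by
  rcases x with _ | _ | n
  · cases h
  · cases h
  · change beta 1 0 (finVal n) = _ at h
    change finVal n = _
    rw [beta_finVal] at h
    split_ifs at h
    · cases h
    · cases h
    · simpa using h

theorem nbhd_one_zero (c : Config) (i : ℤ) : nbhd 1 c i 0 = beta 1 (refH (c i)) (c (i - 1)) := by
  simp [nbhd, sub_eq_add_neg]

theorem globalF_apply_of_eq_finVal {r : ℕ} {lam : (Fin (2 * r) → EZ) → ℤ} {c : Config} {i n : ℤ}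
    (h : c i = finVal n) : globalF r lam c i = finVal (n + lam (nbhd r c i)) := by
  rw [globalF, if_neg (by simp [h, finVal]), h]
  rfl

theorem abs_lamL_le_one (v : Fin 2 → EZ) : |lamL v| ≤ 1 := by
  unfold lamL
  split_ifs <;> simp

theorem eq_finVal_zero_of_lamL_eq_zero {v : Fin 2 → EZ} (h : lamL v = 0) : v 0 = finVal 0 := by
  unfold lamL at h
  split_ifs at h with h1 h2 <;> first | omega | exact le_antisymm (not_lt.1 h2) (not_lt.1 h1)

theorem globalF_L_ne_of_one_lt_abs {c : Config} {i m : ℤ} (hc : c i = finVal 0) (hm : 1 < |m|) :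
    globalF 1 lamL c i ≠ finVal m := by
  rw [globalF_apply_of_eq_finVal hc, Ne, finVal_inj, zero_add]
  rintro rfl
  exact (abs_lamL_le_one _).not_gt hm

theorem eq_zero_left_of_globalF_L_eq_zero {c : Config} {i : ℤ} (hc : c i = finVal 0)
    (hf : globalF 1 lamL c i = finVal 0) : c (i - 1) = finVal 0 := by
  rw [globalF_apply_of_eq_finVal hc, finVal_inj, zero_add] at hf
  have h := eq_finVal_zero_of_lamL_eq_zero hf
  rw [nbhd_one_zero, hc, refH_finVal] at h
  exact eq_finVal_zero_of_beta_one_zero h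

theorem eq_zero_of_globalF_L_eq_zero_on_Ioc {c : Config} {i k : ℤ} (hik : i ≤ k)
    (hk : c k = finVal 0) (hf : ∀ j, i < j → j ≤ k → globalF 1 lamL c j = finVal 0) :
    c i = finVal 0 := by
  induction i, hik using Int.leInductionDown with
  | base => exact hk
  | pred n hnk ih =>
    have hn : c n = finVal 0 := ih fun j hj => hf j (by omega)
    simpa using eq_zero_left_of_globalF_L_eq_zero hn (hf n (by omega) hnk)

theorem globalF_L_ne_of_finiteConf {c e : Config} {m : ℤ} (hc : FiniteConf c)
    (he : ∀ j, 0 < j → e j = finVal 0) (he0 : e 0 = finVal m) (hm : 1 < |m|) :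
    globalF 1 lamL c ≠ e := by
  rintro rfl
  obtain ⟨k, hk⟩ := hc
  have hck : c k = finVal 0 := hk k (by simp)
  have hc0 : c 0 = finVal 0 :=
    eq_zero_of_globalF_L_eq_zero_on_Ioc (Int.natCast_nonneg k) hck fun j hj _ => he j hj
  exact globalF_L_ne_of_one_lt_abs hc0 hm he0

theorem finiteConf_cTwo : FiniteConf cTwo :=
  ⟨1, fun i hi => if_neg (by rintro rfl; simp at hi)⟩

/-- `f_L` is not `F`-surjective: the finite configuration `cTwo` (with `c_0 = 2` and
`c_i = 0` for `i ≠ 0`) has no finite preimage under `f_L`. -/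
theorem L_not_F_surjective :
    FiniteConf cTwo ∧
    (∀ c' : Config, FiniteConf c' → globalF 1 lamL c' ≠ cTwo) ∧
    ¬ (∀ c : Config, FiniteConf c → ∃ c', FiniteConf c' ∧ globalF 1 lamL c' = c) := by
  have no_preimage : ∀ c' : Config, FiniteConf c' → globalF 1 lamL c' ≠ cTwo := fun c' hc' =>
    globalF_L_ne_of_finiteConf hc' (fun j hj => if_neg hj.ne') rfl (by norm_num)
  refine ⟨finiteConf_cTwo, no_preimage, fun hsurj => ?_⟩
  obtain ⟨c', hc', hc'_eq⟩ := hsurj cTwo finiteConf_cTwo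
  exact no_preimage c' hc' hc'_eq
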